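/- arXiv:1003.5097 — 2 statements merged into one kernel-verified Lean document; each statement's English description precedes it below -/
import Mathlib

section
/- Let γ_L be gamma-distributed with shape mL and scale θ. For every ε > 0 there exists L₀ such that for all L > L₀, log(1 + (P/N₀)θmL) − E[log(1 + (P/N₀)γ_L)] < ε · log(1 + (P/N₀)θmL). -/
/-!
By Chebyshev's inequality a gamma variable of shape `a` stays above half its mean `M` with
probability at least `1 - 4 / a`, and there `log (1 + c x)` is within `log 2` of
`log (1 + c M)`. Hence the Jensen gap `log (1 + c M) - E[log (1 + c X)]` is at most
`log 2 + (4 / a) log (1 + c M)`. With `a = mL` and `M = θmL`, the capacity `log (1 + c θmL)`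
tends to infinity while `4 / (mL)` tends to zero, so the gap is eventually an `ε`-fraction of it.
-/

open MeasureTheory ProbabilityTheory Filter Topology Real

namespace ProbabilityTheory

variable {a r : ℝ}

lemma pow_mul_gammaPDFReal (ha : 0 < a) (hr : 0 < r) (n : ℕ) (x : ℝ) :
    x ^ n * gammaPDFReal a r x
      = Gamma (a + n) / (Gamma a * r ^ n) * gammaPDFReal (a + n) r x := by
  have hΓ := (Gamma_pos_of_pos ha).ne'
  unfold gammaPDFReal
  split_ifs with hx
  · rcases hx.eq_or_lt with rfl | hx
    · rcases n with _ | n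
      · simp [hΓ]
      · rw [Real.zero_rpow (by push_cast; linarith : a + ((n + 1 : ℕ) : ℝ) - 1 ≠ 0)]
        simp
    · rw [Real.rpow_add_natCast hr.ne', show a + n - 1 = a - 1 + n by ring,
        Real.rpow_add_natCast hx.ne']
      field_simp
  · simp

lemma integrable_gammaMeasure_iff (ha : 0 < a) (hr : 0 < r) {f : ℝ → ℝ} :
    Integrable f (gammaMeasure a r) ↔ Integrable (fun x ↦ gammaPDFReal a r x * f x) := by
  rw [gammaMeasure, integrable_withDensity_iff_integrable_smul' (f := gammaPDF a r)
    (measurable_gammaPDFReal a r).ennreal_ofReal (ae_of_all _ fun _ ↦ ENNReal.ofReal_lt_top)]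
  simp_rw [gammaPDF, ENNReal.toReal_ofReal (gammaPDFReal_nonneg ha hr _), smul_eq_mul]

lemma integral_gammaMeasure (ha : 0 < a) (hr : 0 < r) (f : ℝ → ℝ) :
    ∫ x, f x ∂gammaMeasure a r = ∫ x, gammaPDFReal a r x * f x := by
  rw [gammaMeasure, integral_withDensity_eq_integral_toReal_smul (f := gammaPDF a r)
    (measurable_gammaPDFReal a r).ennreal_ofReal (ae_of_all _ fun _ ↦ ENNReal.ofReal_lt_top)]
  simp_rw [gammaPDF, ENNReal.toReal_ofReal (gammaPDFReal_nonneg ha hr _), smul_eq_mul]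

lemma integral_gammaPDFReal (ha : 0 < a) (hr : 0 < r) : ∫ x, gammaPDFReal a r x = 1 := by
  have := isProbabilityMeasure_gammaMeasure ha hr
  simpa using (integral_gammaMeasure ha hr fun _ ↦ 1).symm

lemma integrable_gammaPDFReal (ha : 0 < a) (hr : 0 < r) : Integrable (gammaPDFReal a r) := by
  have := isProbabilityMeasure_gammaMeasure ha hr
  simpa using (integrable_gammaMeasure_iff ha hr (f := fun _ ↦ 1)).1 (integrable_const 1)

lemma integrable_pow_gammaMeasure (ha : 0 < a) (hr : 0 < r) (n : ℕ) :
    Integrable (fun x ↦ x ^ n) (gammaMeasure a r) := by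
  rw [integrable_gammaMeasure_iff ha hr]
  simp_rw [mul_comm (gammaPDFReal a r _), pow_mul_gammaPDFReal ha hr]
  exact (integrable_gammaPDFReal (by positivity) hr).const_mul _

lemma integral_pow_gammaMeasure (ha : 0 < a) (hr : 0 < r) (n : ℕ) :
    ∫ x, x ^ n ∂gammaMeasure a r = Gamma (a + n) / (Gamma a * r ^ n) := by
  rw [integral_gammaMeasure ha hr]
  simp_rw [mul_comm (gammaPDFReal a r _), pow_mul_gammaPDFReal ha hr]
  rw [integral_const_mul, integral_gammaPDFReal (by positivity) hr, mul_one]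

lemma integral_id_gammaMeasure (ha : 0 < a) (hr : 0 < r) : ∫ x, x ∂gammaMeasure a r = a / r := by
  have hΓ := (Gamma_pos_of_pos ha).ne'
  have h := integral_pow_gammaMeasure ha hr 1
  simp only [pow_one, Nat.cast_one, Gamma_add_one ha.ne'] at h
  rw [h, mul_comm a, mul_div_mul_left _ _ hΓ]

lemma memLp_id_gammaMeasure (ha : 0 < a) (hr : 0 < r) : MemLp id 2 (gammaMeasure a r) :=
  (memLp_two_iff_integrable_sq aestronglyMeasurable_id).2 (integrable_pow_gammaMeasure ha hr 2)

lemma variance_id_gammaMeasure (ha : 0 < a) (hr : 0 < r) :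
    variance id (gammaMeasure a r) = a / r ^ 2 := by
  have := isProbabilityMeasure_gammaMeasure ha hr
  have hΓ := (Gamma_pos_of_pos ha).ne'
  rw [variance_eq_sub (memLp_id_gammaMeasure ha hr)]
  simp only [Pi.pow_apply, id]
  rw [integral_pow_gammaMeasure ha hr 2, integral_id_gammaMeasure ha hr, Nat.cast_two,
    show a + 2 = a + 1 + 1 by ring, Gamma_add_one (by positivity),
    Gamma_add_one ha.ne']
  field_simp
  ring

lemma ae_nonneg_gammaMeasure : ∀ᵐ x ∂gammaMeasure a r, 0 ≤ x := by
  rw [gammaMeasure,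
    ae_withDensity_iff (f := gammaPDF a r) (measurable_gammaPDFReal a r).ennreal_ofReal]
  exact ae_of_all _ fun x hx ↦ not_lt.1 fun hneg ↦ hx (gammaPDF_of_neg hneg)

end ProbabilityTheory

section LogOneAddMul

variable {Ω : Type*} [MeasurableSpace Ω] {μ : Measure Ω} {X : Ω → ℝ} {c : ℝ}

lemma integrable_log_one_add_mul (hXi : Integrable X μ) (hX0 : ∀ᵐ ω ∂μ, 0 ≤ X ω) (hc : 0 ≤ c) :
    Integrable (fun ω ↦ log (1 + c * X ω)) μ := by
  refine (hXi.const_mul c).mono' ?_ ?_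
  · exact (measurable_log.comp_aemeasurable
      ((hXi.aemeasurable.const_mul c).const_add 1)).aestronglyMeasurable
  · filter_upwards [hX0] with ω hω
    have hpos : 0 < 1 + c * X ω := by positivity
    rw [norm_of_nonneg (log_nonneg (by nlinarith))]
    linarith [log_le_sub_one_of_pos hpos]

lemma log_one_add_mul_mul_probReal_le_integral [IsFiniteMeasure μ] (hXi : Integrable X μ)
    (hX0 : ∀ᵐ ω ∂μ, 0 ≤ X ω) (hc : 0 ≤ c) {t : ℝ} (ht : 0 ≤ t) :
    log (1 + c * t) * μ.real {ω | t ≤ X ω} ≤ ∫ ω, log (1 + c * X ω) ∂μ := by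
  have hlevel : {ω | t ≤ X ω} ⊆ {ω | log (1 + c * t) ≤ log (1 + c * X ω)} := fun ω hω ↦
    log_le_log (by positivity) (by have : t ≤ X ω := hω; nlinarith)
  have hnonneg : 0 ≤ᵐ[μ] fun ω ↦ log (1 + c * X ω) := by
    filter_upwards [hX0] with ω hω using log_nonneg (by nlinarith)
  calc log (1 + c * t) * μ.real {ω | t ≤ X ω}
      ≤ log (1 + c * t) * μ.real {ω | log (1 + c * t) ≤ log (1 + c * X ω)} :=
        mul_le_mul_of_nonneg_left (measureReal_mono hlevel) (log_nonneg (by nlinarith))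
    _ ≤ ∫ ω, log (1 + c * X ω) ∂μ :=
        mul_meas_ge_le_integral_of_nonneg hnonneg (integrable_log_one_add_mul hXi hX0 hc) _

lemma probReal_lt_half_integral_le [IsFiniteMeasure μ] (hX : MemLp X 2 μ) (hmean : 0 < μ[X]) :
    μ.real {ω | X ω < μ[X] / 2} ≤ 4 * variance X μ / μ[X] ^ 2 := by
  have hsub : {ω | X ω < μ[X] / 2} ⊆ {ω | μ[X] / 2 ≤ |X ω - μ[X]|} := fun ω hω ↦ by
    have : X ω < μ[X] / 2 := hω
    show μ[X] / 2 ≤ |X ω - μ[X]|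
    rw [abs_sub_comm]
    exact le_abs.2 (Or.inl (by linarith))
  calc μ.real {ω | X ω < μ[X] / 2}
      ≤ μ.real {ω | μ[X] / 2 ≤ |X ω - μ[X]|} := measureReal_mono hsub
    _ ≤ variance X μ / (μ[X] / 2) ^ 2 :=
        ENNReal.toReal_le_of_le_ofReal (div_nonneg (variance_nonneg X μ) (by positivity))
          (meas_ge_le_variance_div_sq hX (half_pos hmean))
    _ = 4 * variance X μ / μ[X] ^ 2 := by field_simp; ring

theorem log_one_add_mul_integral_sub_integral_le [IsProbabilityMeasure μ] (hX : MemLp X 2 μ)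
    (hX0 : ∀ᵐ ω ∂μ, 0 ≤ X ω) (hmean : 0 < μ[X]) (hc : 0 ≤ c) :
    log (1 + c * μ[X]) - ∫ ω, log (1 + c * X ω) ∂μ
      ≤ log 2 + 4 * variance X μ / μ[X] ^ 2 * log (1 + c * μ[X]) := by
  set M := μ[X]
  set q := 4 * variance X μ / M ^ 2
  have hq : 0 ≤ q := div_nonneg (mul_nonneg zero_le_four (variance_nonneg X μ)) (by positivity)
  have hupper : μ.real {ω | M / 2 ≤ X ω} = 1 - μ.real {ω | X ω < M / 2} := by
    rw [← probReal_compl_eq_one_sub₀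
      (nullMeasurableSet_lt hX.aestronglyMeasurable.aemeasurable aemeasurable_const)]
    congr 1
    ext ω
    simp
  have hcheb := probReal_lt_half_integral_le hX hmean
  have hmarkov := log_one_add_mul_mul_probReal_le_integral (hX.integrable one_le_two) hX0 hc
    (half_pos hmean).le
  have hcM : 0 ≤ c * M := mul_nonneg hc hmean.le
  have hK0 : 0 ≤ log (1 + c * (M / 2)) := log_nonneg (by linarith)
  have hKG : log (1 + c * (M / 2)) ≤ log (1 + c * M) := log_le_log (by linarith) (by linarith)
  have hdouble : log (1 + c * M) ≤ log 2 + log (1 + c * (M / 2)) := by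
    rw [← log_mul two_ne_zero (by linarith)]
    exact log_le_log (by linarith) (by linarith)
  nlinarith [mul_le_mul_of_nonneg_left (show 1 - q ≤ μ.real {ω | M / 2 ≤ X ω} by linarith) hK0,
    mul_le_mul_of_nonneg_right hKG hq]

end LogOneAddMul

lemma log_one_add_mul_mean_sub_integral_gammaMeasure_le {a r c : ℝ} (ha : 0 < a) (hr : 0 < r)
    (hc : 0 ≤ c) :
    log (1 + c * (a / r)) - ∫ x, log (1 + c * x) ∂gammaMeasure a r
      ≤ log 2 + 4 / a * log (1 + c * (a / r)) := by
  have := isProbabilityMeasure_gammaMeasure ha hr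
  have hmean : ∫ x, id x ∂gammaMeasure a r = a / r := integral_id_gammaMeasure ha hr
  have h := log_one_add_mul_integral_sub_integral_le (memLp_id_gammaMeasure ha hr)
    ae_nonneg_gammaMeasure (hmean ▸ div_pos ha hr) hc
  rwa [hmean, variance_id_gammaMeasure ha hr,
    show 4 * (a / r ^ 2) / (a / r) ^ 2 = 4 / a by field_simp] at h

theorem rate_gap_eventually_small (m θ P N₀ : ℝ)
    (hm : 0 < m) (hθ : 0 < θ) (hP : 0 < P) (hN : 0 < N₀) :
    ∀ ε > (0 : ℝ), ∃ L₀ : ℕ, ∀ L : ℕ, L > L₀ →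
      Real.log (1 + (P / N₀) * (θ * m * L)) -
          ∫ x, Real.log (1 + (P / N₀) * x) ∂(gammaMeasure (m * L) θ⁻¹) <
        ε * Real.log (1 + (P / N₀) * (θ * m * L)) := by
  intro ε hε
  set c := P / N₀
  have hc : 0 < c := div_pos hP hN
  have hcapacity : Tendsto (fun L : ℕ ↦ log (1 + c * (θ * m * L))) atTop atTop :=
    tendsto_log_atTop.comp (tendsto_atTop_add_const_left _ 1
      ((tendsto_natCast_atTop_atTop.const_mul_atTop (mul_pos hθ hm)).const_mul_atTop hc))
  have hshape : Tendsto (fun L : ℕ ↦ 4 / (m * L)) atTop (𝓝 0) :=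
    tendsto_const_nhds.div_atTop (tendsto_natCast_atTop_atTop.const_mul_atTop hm)
  obtain ⟨L₀, hL₀⟩ := eventually_atTop.1 ((hcapacity.eventually_gt_atTop (2 * log 2 / ε)).and
    ((hshape.eventually (gt_mem_nhds (half_pos hε))).and (eventually_gt_atTop 0)))
  refine ⟨L₀, fun L hL ↦ ?_⟩
  obtain ⟨hG, hs, hL0⟩ := hL₀ L hL.le
  have hgap := log_one_add_mul_mean_sub_integral_gammaMeasure_le
    (mul_pos hm (Nat.cast_pos.2 hL0)) (inv_pos.2 hθ) hc.le
  rw [show m * L / θ⁻¹ = θ * m * L by rw [div_inv_eq_mul]; ring] at hgap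
  have hlog2 : log 2 < ε / 2 * log (1 + c * (θ * m * L)) := by
    rw [div_lt_iff₀ hε] at hG
    linarith
  have hG0 : 0 < log (1 + c * (θ * m * L)) := by
    linarith [div_pos (mul_pos two_pos (log_pos one_lt_two)) hε]
  nlinarith [mul_le_mul_of_nonneg_right hs.le hG0.le]
end

section
/- Let m > 0 and 0 < α < 1. Then L·log(L)·(1 − Q(mL, αmL)) → 0 as L → ∞, where Q(a,x) = Γ(a,x)/Γ(a). -/
/-!
With `γ` the lower incomplete gamma function, `1 - Q(a, x) = γ(a, x) / Γ(a)`. A Chernoff bound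
(multiply the integrand by `e^{(s-1)(x-t)} ≥ 1` for `t ≤ x`, `s ≥ 1`, and integrate over all of
`(0, ∞)`) gives `γ(a, x) ≤ e^{(s-1)x} s^{-a} Γ(a)`, and `s = 1/α` yields
`1 - Q(a, αa) ≤ (α e^{1-α})^a`. As `α e^{1-α} < 1`, this decays exponentially in `a = mL`,
which beats the factor `L log L`.
-/
open Filter MeasureTheory Set Real

noncomputable def upperIncGamma (a x : ℝ) : ℝ :=
  ∫ t in Set.Ioi x, t ^ (a - 1) * Real.exp (-t)

noncomputable def normUpperIncGamma (a x : ℝ) : ℝ :=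
  upperIncGamma a x / Real.Gamma a

noncomputable def lowerIncGamma (a x : ℝ) : ℝ :=
  ∫ t in Ioc 0 x, t ^ (a - 1) * exp (-t)

section IncompleteGamma

variable {a x : ℝ}

lemma integrableOn_rpow_sub_one_mul_exp_neg (ha : 0 < a) {S : Set ℝ} (hS : S ⊆ Ioi 0) :
    IntegrableOn (fun t => t ^ (a - 1) * exp (-t)) S := by
  simpa only [mul_comm] using (GammaIntegral_convergent ha).mono_set hS

lemma lowerIncGamma_nonneg (a x : ℝ) : 0 ≤ lowerIncGamma a x :=
  setIntegral_nonneg measurableSet_Ioc fun _ ht =>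
    mul_nonneg (rpow_nonneg ht.1.le _) (exp_nonneg _)

lemma lowerIncGamma_add_upperIncGamma (ha : 0 < a) (hx : 0 ≤ x) :
    lowerIncGamma a x + upperIncGamma a x = Gamma a := by
  rw [lowerIncGamma, upperIncGamma, ← setIntegral_union (Ioc_disjoint_Ioi le_rfl) measurableSet_Ioi
    (integrableOn_rpow_sub_one_mul_exp_neg ha Ioc_subset_Ioi_self)
    (integrableOn_rpow_sub_one_mul_exp_neg ha (Ioi_subset_Ioi hx)),
    Ioc_union_Ioi_eq_Ioi hx, Gamma_eq_integral ha]
  simp only [mul_comm]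

lemma one_sub_normUpperIncGamma (ha : 0 < a) (hx : 0 ≤ x) :
    1 - normUpperIncGamma a x = lowerIncGamma a x / Gamma a := by
  rw [normUpperIncGamma, ← lowerIncGamma_add_upperIncGamma ha hx]
  have : lowerIncGamma a x + upperIncGamma a x ≠ 0 := by
    rw [lowerIncGamma_add_upperIncGamma ha hx]; exact (Gamma_pos_of_pos ha).ne'
  field_simp
  ring

lemma one_sub_normUpperIncGamma_nonneg (ha : 0 < a) (hx : 0 ≤ x) :
    0 ≤ 1 - normUpperIncGamma a x := by
  rw [one_sub_normUpperIncGamma ha hx]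
  exact div_nonneg (lowerIncGamma_nonneg a x) (Gamma_pos_of_pos ha).le

lemma lowerIncGamma_le_exp_mul_rpow_mul_Gamma (ha : 0 < a) {s : ℝ} (hs : 1 ≤ s) :
    lowerIncGamma a x ≤ exp ((s - 1) * x) * ((1 / s) ^ a * Gamma a) := by
  have hs0 : 0 < s := by linarith
  have hint : IntegrableOn (fun t => t ^ (a - 1) * exp (-(s * t))) (Ioi 0) := by
    simpa only [rpow_one, neg_mul] using
      integrableOn_rpow_mul_exp_neg_mul_rpow (p := 1) (by linarith) one_pos hs0
  rw [← integral_rpow_mul_exp_neg_mul_Ioi ha hs0, ← integral_const_mul]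
  calc lowerIncGamma a x
      ≤ ∫ t in Ioc 0 x, exp ((s - 1) * x) * (t ^ (a - 1) * exp (-(s * t))) := by
        refine setIntegral_mono_on (integrableOn_rpow_sub_one_mul_exp_neg ha Ioc_subset_Ioi_self)
          ((hint.mono_set Ioc_subset_Ioi_self).const_mul _) measurableSet_Ioc fun t ht => ?_
        rw [mul_left_comm, ← exp_add]
        exact mul_le_mul_of_nonneg_left (exp_le_exp.mpr (by nlinarith [ht.2]))
          (rpow_nonneg ht.1.le _)
    _ ≤ ∫ t in Ioi 0, exp ((s - 1) * x) * (t ^ (a - 1) * exp (-(s * t))) :=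
        setIntegral_mono_set (hint.const_mul _)
          (ae_restrict_of_forall_mem measurableSet_Ioi fun t ht =>
            mul_nonneg (exp_nonneg _) (mul_nonneg (rpow_nonneg (le_of_lt ht) _) (exp_nonneg _)))
          Ioc_subset_Ioi_self.eventuallyLE

end IncompleteGamma

lemma one_sub_normUpperIncGamma_mul_le {a α : ℝ} (ha : 0 < a) (hα0 : 0 < α) (hα1 : α ≤ 1) :
    1 - normUpperIncGamma a (α * a) ≤ (α * exp (1 - α)) ^ a := by
  have hΓ := Gamma_pos_of_pos ha
  have hs : 1 ≤ 1 / α := by rw [le_div_iff₀ hα0]; linarith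
  rw [one_sub_normUpperIncGamma ha (by positivity), div_le_iff₀ hΓ]
  refine (lowerIncGamma_le_exp_mul_rpow_mul_Gamma ha hs).trans_eq ?_
  rw [one_div_one_div, mul_rpow hα0.le (exp_nonneg _), ← exp_mul]
  field_simp

lemma mul_exp_one_sub_lt_one {α : ℝ} (hα1 : α ≠ 1) : α * exp (1 - α) < 1 := by
  have h : α < exp (α - 1) := by simpa using add_one_lt_exp (sub_ne_zero.mpr hα1)
  calc α * exp (1 - α) < exp (α - 1) * exp (1 - α) := by gcongr
    _ = 1 := by rw [← exp_add, sub_add_sub_cancel', sub_self, exp_zero]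

lemma tendsto_mul_log_mul_rpow_mul_atTop_nhds_zero {m β : ℝ} (hm : 0 < m) (hβ0 : 0 < β)
    (hβ1 : β < 1) : Tendsto (fun L => L * log L * β ^ (m * L)) atTop (nhds 0) := by
  obtain ⟨c, hc, hβL⟩ : ∃ c > 0, ∀ L, β ^ (m * L) = exp (-c * L) :=
    ⟨-(m * log β), neg_pos.mpr (mul_neg_of_pos_of_neg hm (log_neg hβ0 hβ1)),
      fun L => by rw [rpow_def_of_pos hβ0]; ring_nf⟩
  refine squeeze_zero' ?_ ?_ (tendsto_rpow_mul_exp_neg_mul_atTop_nhds_zero 2 c hc)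
  · filter_upwards [eventually_ge_atTop 1] with L hL
    have := log_nonneg hL
    positivity
  · filter_upwards [eventually_ge_atTop 1] with L hL
    have hlog : log L ≤ L := (log_le_sub_one_of_pos (by linarith)).trans (by linarith)
    rw [hβL, rpow_two, sq]
    gcongr

theorem LlogL_gamma_term_tendsto_zero (m α : ℝ) (hm : 0 < m)
    (hα0 : 0 < α) (hα1 : α < 1) :
    Tendsto (fun L : ℝ =>
        L * Real.log L * (1 - normUpperIncGamma (m * L) (α * m * L)))
      atTop (nhds 0) := by
  have hβ := mul_exp_one_sub_lt_one hα1.ne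
  refine squeeze_zero' ?_ ?_
    (tendsto_mul_log_mul_rpow_mul_atTop_nhds_zero hm (by positivity) hβ)
  all_goals
    filter_upwards [eventually_ge_atTop 1] with L hL
    have hmL : 0 < m * L := by positivity
    have hLlogL : 0 ≤ L * log L := mul_nonneg (by positivity) (log_nonneg hL)
    rw [mul_assoc α]
  · exact mul_nonneg hLlogL (one_sub_normUpperIncGamma_nonneg hmL (by positivity))
  · exact mul_le_mul_of_nonneg_left (one_sub_normUpperIncGamma_mul_le hmL hα0 hα1.le) hLlogL
end
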